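/- arXiv:1502.04477 — 3 statements merged into one kernel-verified Lean document; each statement's English description precedes it below -/
import Mathlib

section
/- For every natural number k with 0 ≤ k ≤ n−1, one has {k}! · {n−1−k}! = {n−1}!. -/
/-- The quantum number `{a} = ξ^a - ξ^{-a}` where `ξ = exp(πi/n)`. -/
noncomputable def qnum (n : ℕ) (a : ℂ) : ℂ :=
  Complex.exp (Real.pi * Complex.I * a / n) - Complex.exp (-(Real.pi * Complex.I * a) / n)


/-- The quantum factorial `{k}! = ∏_{j=1}^k {j}`. -/
noncomputable def qfact (n k : ℕ) : ℂ :=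
  ∏ j ∈ Finset.range k, qnum n (j + 1)

/-- `{n - a} = {a}` because `ξ^n = -1`; for `n = 0` both sides are the junk value `0`. -/
lemma qnum_natCast_sub (n : ℕ) (a : ℂ) : qnum n (n - a) = qnum n a := by
  rcases eq_or_ne n 0 with rfl | hn
  · simp [qnum]
  have hn' : (n : ℂ) ≠ 0 := Nat.cast_ne_zero.mpr hn
  have hpos : Real.pi * Complex.I * (n - a) / n
      = Real.pi * Complex.I + -(Real.pi * Complex.I * a) / n := by
    field_simp; ring
  have hneg : -(Real.pi * Complex.I * (n - a)) / n
      = -(Real.pi * Complex.I) + Real.pi * Complex.I * a / n := by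
    field_simp; ring
  rw [qnum, qnum, hpos, hneg, Complex.exp_add, Complex.exp_add, Complex.exp_neg,
    Complex.exp_pi_mul_I]
  ring

lemma prod_qnum_add_eq_qfact {n k m : ℕ} (h : k + m + 1 = n) :
    ∏ i ∈ Finset.range m, qnum n ((k + i : ℕ) + 1) = qfact n m := by
  rw [qfact, ← Finset.prod_range_reflect]
  refine Finset.prod_congr rfl fun j hj => ?_
  have hsum : k + (m - 1 - j) + 1 + (j + 1) = n := by
    have := Finset.mem_range.mp hj
    omega
  rw [← qnum_natCast_sub n (j + 1)]
  congr 1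
  rw [eq_sub_iff_add_eq]
  exact_mod_cast hsum

theorem qfact_mul_qfact_compl_general (n : ℕ) (k : ℕ) (hk : k ≤ n - 1) :
    qfact n k * qfact n (n - 1 - k) = qfact n (n - 1) := by
  obtain _ | n := n
  · obtain rfl : k = 0 := by omega
    simp [qfact]
  obtain ⟨m, rfl⟩ := Nat.exists_eq_add_of_le (show k ≤ n by omega)
  rw [Nat.add_sub_cancel, Nat.add_sub_cancel_left, ← prod_qnum_add_eq_qfact rfl, qfact, qfact,
    Finset.prod_range_add]

/-- For `0 ≤ k ≤ n-1`, `{k}! ⬝ {n-1-k}! = {n-1}!`. -/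
theorem qfact_mul_qfact_compl (n : ℕ) (hn : 2 ≤ n) (k : ℕ) (hk : k ≤ n - 1) :
    qfact n k * qfact n (n - 1 - k) = qfact n (n - 1) :=
  qfact_mul_qfact_compl_general n k hk
end

section
/- For every complex number f, writing f̄ := n−1−f, the quantum binomial satisfies [2f̄+n; 2f̄+1] = [2f+n; 2f+1]. (In both binomials the difference of the two entries equals n−1, so both are defined.) -/
/-- The quantum binomial `[a; a-k] = ∏_{j=0}^{k-1} {a-j}/{a-k-j}` (top entry `a`,
difference of the two entries the natural number `k`), an empty product being `1`. -/
noncomputable def qbinom (n : ℕ) (a : ℂ) (k : ℕ) : ℂ :=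
  ∏ j ∈ Finset.range k, qnum n (a - j) / qnum n ((k : ℂ) - j)

/-! Since `ξ^n = -1`, the quantum number satisfies `{a + n} = -{a}` and `{-a} = -{a}`, hence the
reflection symmetry `{3n - a} = {a}`. Reversing the order of the factors in the numerator of
`[a; a - k]` therefore turns it into the numerator of `[b; b - k]` whenever `a + b = 3n + k - 1`,
while the denominators depend on `k` only. For `a = 2f̄ + n`, `b = 2f + n`, `k = n - 1` this
condition holds. -/

theorem qnum_neg (n : ℕ) (a : ℂ) : qnum n (-a) = -qnum n a := by
  simp only [qnum, mul_neg, neg_neg, neg_sub]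

theorem qnum_add_self (n : ℕ) (a : ℂ) : qnum n (a + n) = -qnum n a := by
  rcases eq_or_ne n 0 with rfl | hn
  · simp [qnum]
  have hn' : (n : ℂ) ≠ 0 := Nat.cast_ne_zero.mpr hn
  have h_pos : (Real.pi : ℂ) * Complex.I * (a + n) / n
      = Real.pi * Complex.I * a / n + Real.pi * Complex.I := by
    field_simp
  have h_neg : -((Real.pi : ℂ) * Complex.I * (a + n)) / n
      = -(Real.pi * Complex.I * a) / n - Real.pi * Complex.I := by
    field_simp
    ring
  rw [qnum, qnum, h_pos, h_neg, Complex.exp_add, Complex.exp_sub, Complex.exp_pi_mul_I]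
  ring

theorem qnum_sub_self (n : ℕ) (a : ℂ) : qnum n (a - n) = -qnum n a := by
  rw [← neg_neg (qnum n (a - n)), ← qnum_add_self, sub_add_cancel]

theorem qnum_three_mul_sub (n : ℕ) (a : ℂ) : qnum n (3 * n - a) = qnum n a := by
  rw [show 3 * (n : ℂ) - a = -(a - n - n - n) by ring, qnum_neg, qnum_sub_self, qnum_sub_self,
    qnum_sub_self]
  ring

theorem qbinom_eq_of_add_eq (n : ℕ) {a b : ℂ} (k : ℕ) (hab : a + b = 3 * n + k - 1) :
    qbinom n a k = qbinom n b k := by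
  unfold qbinom
  rw [Finset.prod_div_distrib, Finset.prod_div_distrib]
  congr 1
  rw [← Finset.prod_range_reflect]
  refine Finset.prod_congr rfl fun j hj => ?_
  have h_cast : ((k - 1 - j : ℕ) : ℂ) = k - 1 - j := by
    rw [Nat.sub_sub, Nat.cast_sub (by simpa [add_comm] using Finset.mem_range.mp hj)]
    push_cast
    ring
  rw [h_cast, ← qnum_three_mul_sub n (b - j)]
  congr 1
  linear_combination hab

/-- For every complex `f`, writing `f̄ = n-1-f`, one has
`[2f̄+n; 2f̄+1] = [2f+n; 2f+1]` (both binomials have difference of entries `n-1`). -/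
theorem qbinom_bar_invariant (n : ℕ) (hn : 2 ≤ n) (f : ℂ) :
    qbinom n (2 * ((n : ℂ) - 1 - f) + n) (n - 1) = qbinom n (2 * f + n) (n - 1) := by
  apply qbinom_eq_of_add_eq
  rw [Nat.cast_sub (by omega : 1 ≤ n)]
  push_cast
  ring
end

section
/- Let a, b, c, d, e, f be integers such that the four triples (a,b,c), (c,d,e), (a,e,f), (b,d,f) are admissible, set s := max(0, n−1−2e, (d+f−b)−(d+e−c), (b+f−d)+(c+d−e)−(n−1)) and S := min(c+d−e, a+f−e, n−1−(a+e−f), n−1−(d+e−c)), and let z be an integer with s ≤ z ≤ S. Then each of the four quantum binomials [a+e+f+1−n; 2e+z+1−n], [a+e−f+z; a+e−f], [(b+f−d)+(c+d−e)−z; b+f−d], [(d+e−c)+z; d+f−b] is defined (the difference of its two entries lies in {0, 1, …, n−1}) and is nonzero. -/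
/-- The quantum binomial `[a; b]` for integer entries. -/
noncomputable def qbinomZ (n : ℕ) (a b : ℤ) : ℂ :=
  qbinom n (a : ℂ) (a - b).toNat

/-- A triple of integers `(i,j,k)` is admissible. -/
def Admissible (n : ℕ) (i j k : ℤ) : Prop :=
  0 < i ∧ i < (n : ℤ) - 1 ∧ 0 < j ∧ j < (n : ℤ) - 1 ∧ 0 < k ∧ k < (n : ℤ) - 1 ∧
  (n : ℤ) - 1 < i + j + k ∧ i + j + k < 2 * ((n : ℤ) - 1) ∧
  0 < i + j - k ∧ i + j - k < (n : ℤ) - 1 ∧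
  0 < j + k - i ∧ j + k - i < (n : ℤ) - 1 ∧
  0 < k + i - j ∧ k + i - j < (n : ℤ) - 1

/-! A quantum number `{m}` at an integer `m` vanishes exactly when `ξ^{2m} = 1`, i.e. when
`n ∣ m`. So `[x; y]` is nonzero as soon as `0 ≤ y ≤ x ≤ n - 1`, because then every quantum
number in its defining product has argument strictly between `0` and `n`. For the four
binomials these bounds are linear consequences of the admissibility of `(a,e,f)` and
`(b,d,f)` together with `s ≤ z ≤ S`. -/

theorem qnum_intCast_eq_zero_iff {n : ℕ} (hn : n ≠ 0) (m : ℤ) :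
    qnum n m = 0 ↔ (n : ℤ) ∣ m := by
  have hn' : (n : ℂ) ≠ 0 := by exact_mod_cast hn
  rw [qnum, sub_eq_zero, Complex.exp_eq_exp_iff_exists_int]
  refine exists_congr fun k => ?_
  rw [← Int.cast_inj (α := ℂ), Int.cast_mul, Int.cast_natCast]
  constructor
  · intro h
    field_simp at h
    linear_combination h / 2
  · intro h
    rw [h]
    field_simp
    ring

theorem qnum_intCast_ne_zero {n : ℕ} {m : ℤ} (h0 : 0 < m) (hm : m < n) : qnum n m ≠ 0 := by
  rw [Ne, qnum_intCast_eq_zero_iff (by omega)]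
  exact fun hdvd => h0.ne' (Int.eq_zero_of_dvd_of_nonneg_of_lt h0.le hm hdvd)

theorem qbinom_intCast_ne_zero {n k : ℕ} {a : ℤ} (hk : k ≤ a) (ha : a < n) :
    qbinom n a k ≠ 0 := by
  refine Finset.prod_ne_zero_iff.mpr fun j hj => div_ne_zero ?_ ?_
  all_goals have := Finset.mem_range.mp hj
  · exact_mod_cast qnum_intCast_ne_zero (m := a - j) (by omega) (by omega)
  · exact_mod_cast qnum_intCast_ne_zero (m := k - j) (by omega) (by omega)

theorem qbinomZ_ne_zero {n : ℕ} {a b : ℤ} (hb : 0 ≤ b) (hba : b ≤ a) (ha : a < n) :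
    qbinomZ n a b ≠ 0 :=
  qbinom_intCast_ne_zero (by omega) ha

theorem tet6j_summand_binomials_defined_ne_zero_general (n : ℕ) (a b c d e f : ℤ)
    (haef : Admissible n a e f) (hbdf : Admissible n b d f) (z : ℤ)
    (hs : max (max 0 ((n : ℤ) - 1 - 2 * e))
        (max ((d + f - b) - (d + e - c)) ((b + f - d) + (c + d - e) - ((n : ℤ) - 1))) ≤ z)
    (hS : z ≤ min (min (c + d - e) (a + f - e))
        (min ((n : ℤ) - 1 - (a + e - f)) ((n : ℤ) - 1 - (d + e - c)))) :
    (0 ≤ (a + e + f + 1 - n) - (2 * e + z + 1 - n) ∧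
      (a + e + f + 1 - n) - (2 * e + z + 1 - n) ≤ (n : ℤ) - 1 ∧
      qbinomZ n (a + e + f + 1 - n) (2 * e + z + 1 - n) ≠ 0) ∧
    (0 ≤ (a + e - f + z) - (a + e - f) ∧
      (a + e - f + z) - (a + e - f) ≤ (n : ℤ) - 1 ∧
      qbinomZ n (a + e - f + z) (a + e - f) ≠ 0) ∧
    (0 ≤ ((b + f - d) + (c + d - e) - z) - (b + f - d) ∧
      ((b + f - d) + (c + d - e) - z) - (b + f - d) ≤ (n : ℤ) - 1 ∧
      qbinomZ n ((b + f - d) + (c + d - e) - z) (b + f - d) ≠ 0) ∧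
    (0 ≤ ((d + e - c) + z) - (d + f - b) ∧
      ((d + e - c) + z) - (d + f - b) ≤ (n : ℤ) - 1 ∧
      qbinomZ n ((d + e - c) + z) (d + f - b) ≠ 0) := by
  have defined_ne_zero {x y : ℤ} (hy : 0 ≤ y) (hyx : y ≤ x) (hx : x ≤ (n : ℤ) - 1) :
      0 ≤ x - y ∧ x - y ≤ (n : ℤ) - 1 ∧ qbinomZ n x y ≠ 0 :=
    ⟨by omega, by omega, qbinomZ_ne_zero hy hyx (by omega)⟩
  unfold Admissible at haef hbdf
  simp only [max_le_iff, le_min_iff] at hs hS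
  exact ⟨defined_ne_zero (by omega) (by omega) (by omega),
    defined_ne_zero (by omega) (by omega) (by omega),
    defined_ne_zero (by omega) (by omega) (by omega),
    defined_ne_zero (by omega) (by omega) (by omega)⟩

/-- for `s ≤ z ≤ S`, each of the four quantum binomials in the summand
of the deformed 6j-symbol formula is defined (difference of entries in `{0,…,n-1}`)
and nonzero. -/
theorem tet6j_summand_binomials_defined_ne_zero (n : ℕ) (hn : 2 ≤ n) (a b c d e f : ℤ)
    (habc : Admissible n a b c) (hcde : Admissible n c d e)
    (haef : Admissible n a e f) (hbdf : Admissible n b d f) (z : ℤ)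
    (hs : max (max 0 ((n : ℤ) - 1 - 2 * e))
        (max ((d + f - b) - (d + e - c)) ((b + f - d) + (c + d - e) - ((n : ℤ) - 1))) ≤ z)
    (hS : z ≤ min (min (c + d - e) (a + f - e))
        (min ((n : ℤ) - 1 - (a + e - f)) ((n : ℤ) - 1 - (d + e - c)))) :
    (0 ≤ (a + e + f + 1 - n) - (2 * e + z + 1 - n) ∧
      (a + e + f + 1 - n) - (2 * e + z + 1 - n) ≤ (n : ℤ) - 1 ∧
      qbinomZ n (a + e + f + 1 - n) (2 * e + z + 1 - n) ≠ 0) ∧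
    (0 ≤ (a + e - f + z) - (a + e - f) ∧
      (a + e - f + z) - (a + e - f) ≤ (n : ℤ) - 1 ∧
      qbinomZ n (a + e - f + z) (a + e - f) ≠ 0) ∧
    (0 ≤ ((b + f - d) + (c + d - e) - z) - (b + f - d) ∧
      ((b + f - d) + (c + d - e) - z) - (b + f - d) ≤ (n : ℤ) - 1 ∧
      qbinomZ n ((b + f - d) + (c + d - e) - z) (b + f - d) ≠ 0) ∧
    (0 ≤ ((d + e - c) + z) - (d + f - b) ∧
      ((d + e - c) + z) - (d + f - b) ≤ (n : ℤ) - 1 ∧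
      qbinomZ n ((d + e - c) + z) (d + f - b) ≠ 0) :=
  tet6j_summand_binomials_defined_ne_zero_general n a b c d e f haef hbdf z hs hS
end
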